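/- Let g be a finite-dimensional real semi-simple Lie algebra with bi-invariant inner product and orthonormal basis {E_i}, structure constants C_{ij}^k, and λ_1,…,λ_n ≥ 1 with at least one λ_i > 1. Then (1/4)Σ_{i,j,k}(C_{ij}^k)²[2/λ_i − λ_k/(λ_iλ_j)] < (1/4)Σ_{i,j,k}(C_{ij}^k)². -/

import Mathlib

/-!
Skew-adjointness of every `ad X` gives `C i j k = -C i k j`, so the squared structure constants are
symmetric in `j, k`. Averaging the weight `2/λᵢ - λₖ/(λᵢλⱼ)` with its `j ↔ k` swap gives
`1/λᵢ - (λⱼ - λₖ)²/(2λᵢλⱼλₖ) ≤ 1/λᵢ`, so the left side is at most `(1/4) ∑ᵢ Tᵢ / λᵢ` with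
`Tᵢ = ∑ⱼₖ (Cᵢⱼᵏ)²`. Each `Tᵢ / λᵢ ≤ Tᵢ`, strictly for an index with `λᵢ > 1` because `Tᵢ > 0`:
otherwise `ad Eᵢ = 0`, so `Eᵢ` lies in the kernel of the Killing form.
-/
open RealInnerProductSpace

lemma LieAlgebra.eq_zero_of_forall_lie_eq_zero {R L : Type*} [CommRing R] [LieRing L]
    [LieAlgebra R L] (hss : ∀ X : L, (∀ Y : L, killingForm R L X Y = 0) → X = 0) {X : L}
    (hX : ∀ Y : L, ⁅X, Y⁆ = 0) : X = 0 := by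
  have had : ad R L X = 0 := LinearMap.ext hX
  exact hss X fun Y => by simp [killingForm_apply_apply, had]

lemma OrthonormalBasis.inner_eq_zero_of_forall_inner_eq_zero {𝕜 E ι : Type*} [RCLike 𝕜]
    [NormedAddCommGroup E] [InnerProductSpace 𝕜 E] [Fintype ι] (b : OrthonormalBasis ι 𝕜 E)
    {x : E} (hx : ∀ k, inner 𝕜 x (b k) = 0) (y : E) : inner 𝕜 x y = 0 := by
  rw [InnerProductSpace.ext_inner_right_basis (x := x) (y := 0) b.toBasis (by simpa using hx),
    inner_zero_left]

lemma OrthonormalBasis.exists_inner_lie_ne_zero {L ι : Type*} [LieRing L] [LieAlgebra ℝ L]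
    [NormedAddCommGroup L] [InnerProductSpace ℝ L] [Fintype ι]
    (hskew : ∀ X Y Z : L, ⟪⁅X, Y⁆, Z⟫ = -⟪Y, ⁅X, Z⁆⟫)
    (hss : ∀ X : L, (∀ Y : L, killingForm ℝ L X Y = 0) → X = 0)
    (b : OrthonormalBasis ι ℝ L) (i : ι) : ∃ j k, ⟪⁅b i, b j⁆, b k⟫ ≠ 0 := by
  by_contra! h
  -- `L` carries two unrelated additive structures (from `LieRing` and from `NormedAddCommGroup`),
  -- so `0 : L` is never written: `⁅b i, b i⁆` is a zero for both.
  have hinner : ∀ Y v, ⟪⁅b i, Y⁆, v⟫ = 0 := fun Y =>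
    b.inner_eq_zero_of_forall_inner_eq_zero fun k => by
      rw [hskew, real_inner_comm, b.inner_eq_zero_of_forall_inner_eq_zero (h k), neg_zero]
  have hX : ∀ Y, ⁅b i, Y⁆ = ⁅b i, b i⁆ := fun Y =>
    ext_inner_right ℝ fun v => by rw [hinner, hinner]
  have hbi : b i = ⁅b i, b i⁆ :=
    (LieAlgebra.eq_zero_of_forall_lie_eq_zero hss fun Y => (hX Y).trans (lie_self _)).trans
      (lie_self _).symm
  have hone : ⟪b i, b i⟫ = 1 := by simp
  rw [hbi, hinner] at hone
  exact zero_ne_one hone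

lemma weight_add_weight_swap_le {a b c : ℝ} (ha : 0 < a) (hb : 0 < b) (hc : 0 < c) :
    (2 / a - c / (a * b)) + (2 / a - b / (a * c)) ≤ 2 / a := by
  have hgap : 2 / a - ((2 / a - c / (a * b)) + (2 / a - b / (a * c))) =
      (b - c) ^ 2 / (a * b * c) := by
    field_simp
    ring
  have hsq : 0 ≤ (b - c) ^ 2 / (a * b * c) := by positivity
  linarith

lemma Finset.sum_sum_mul_comm_of_symm {κ R : Type*} [AddCommMonoid R] [Mul R] (s : Finset κ)
    (c w : κ → κ → R)
    (hc : ∀ j k, c k j = c j k) :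
    ∑ j ∈ s, ∑ k ∈ s, c j k * w k j = ∑ j ∈ s, ∑ k ∈ s, c j k * w j k := by
  rw [Finset.sum_comm]
  simp only [hc]

lemma sum_sq_mul_weight_le_div {κ : Type*} [Fintype κ] (C : κ → κ → ℝ)
    (hC : ∀ j k, C k j = -C j k) (lam : κ → ℝ) (hlam : ∀ j, 0 < lam j) {a : ℝ} (ha : 0 < a) :
    ∑ j, ∑ k, C j k ^ 2 * (2 / a - lam k / (a * lam j)) ≤ (∑ j, ∑ k, C j k ^ 2) / a := by
  have hsq : ∀ j k, C k j ^ 2 = C j k ^ 2 := fun j k => by rw [hC, neg_sq]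
  have hswap := Finset.sum_sum_mul_comm_of_symm Finset.univ (fun j k => C j k ^ 2)
    (fun j k => 2 / a - lam j / (a * lam k)) hsq
  have hsym : 2 * ∑ j, ∑ k, C j k ^ 2 * (2 / a - lam k / (a * lam j)) = ∑ j, ∑ k,
      C j k ^ 2 * ((2 / a - lam k / (a * lam j)) + (2 / a - lam j / (a * lam k))) := by
    simp only [mul_add, Finset.sum_add_distrib, hswap]
    ring
  have hbound : ∑ j, ∑ k,
      C j k ^ 2 * ((2 / a - lam k / (a * lam j)) + (2 / a - lam j / (a * lam k))) ≤
      ∑ j, ∑ k, C j k ^ 2 * (2 / a) :=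
    Finset.sum_le_sum fun j _ => Finset.sum_le_sum fun k _ =>
      mul_le_mul_of_nonneg_left (weight_add_weight_swap_le ha (hlam j) (hlam k)) (sq_nonneg _)
  have htotal : ∑ j, ∑ k, C j k ^ 2 * (2 / a) = 2 * ((∑ j, ∑ k, C j k ^ 2) / a) := by
    simp only [← Finset.sum_mul]
    ring
  linarith

lemma sum_div_lt_sum {ι : Type*} [Fintype ι] (T lam : ι → ℝ) (hT : ∀ i, 0 ≤ T i)
    (hlam : ∀ i, 1 ≤ lam i) {i₀ : ι} (hT₀ : 0 < T i₀) (hlam₀ : 1 < lam i₀) :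
    ∑ i, T i / lam i < ∑ i, T i :=
  Finset.sum_lt_sum (fun i _ => div_le_self (hT i) (hlam i))
    ⟨i₀, Finset.mem_univ _, div_lt_self hT₀ hlam₀⟩

theorem stmt_18_general {L : Type*} [LieRing L] [LieAlgebra ℝ L]
    [NormedAddCommGroup L] [InnerProductSpace ℝ L]
    (hskew : ∀ X Y Z : L, ⟪⁅X, Y⁆, Z⟫ = -⟪Y, ⁅X, Z⁆⟫)
    (hss : ∀ X : L, (∀ Y : L, killingForm ℝ L X Y = 0) → X = 0)
    {n : ℕ} (b : OrthonormalBasis (Fin n) ℝ L)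
    (C : Fin n → Fin n → Fin n → ℝ) (hC : ∀ i j k, C i j k = ⟪⁅b i, b j⁆, b k⟫)
    (lam : Fin n → ℝ) (hlam : ∀ i, 1 ≤ lam i) (hone : ∃ i, 1 < lam i) :
    (1/4 : ℝ) * ∑ i, ∑ j, ∑ k, (C i j k)^2 * (2 / lam i - lam k / (lam i * lam j)) <
      (1/4 : ℝ) * ∑ i, ∑ j, ∑ k, (C i j k)^2 := by
  obtain ⟨i₀, hi₀⟩ := hone
  have hpos : ∀ i, 0 < lam i := fun i => one_pos.trans_le (hlam i)
  have hanti : ∀ i j k, C i k j = -C i j k := fun i j k => by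
    rw [hC, hC, hskew, real_inner_comm]
  have hT₀ : 0 < ∑ j, ∑ k, C i₀ j k ^ 2 := by
    obtain ⟨j₀, k₀, hne⟩ := b.exists_inner_lie_ne_zero hskew hss i₀
    refine Finset.sum_pos' (fun j _ => by positivity) ⟨j₀, Finset.mem_univ _, ?_⟩
    refine Finset.sum_pos' (fun k _ => by positivity) ⟨k₀, Finset.mem_univ _, ?_⟩
    rw [hC]
    exact sq_pos_of_ne_zero hne
  have hlt := sum_div_lt_sum (fun i => ∑ j, ∑ k, C i j k ^ 2) lam
    (fun i => by positivity) hlam hT₀ hi₀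
  have hle : ∑ i, ∑ j, ∑ k, C i j k ^ 2 * (2 / lam i - lam k / (lam i * lam j)) ≤
      ∑ i, (∑ j, ∑ k, C i j k ^ 2) / lam i :=
    Finset.sum_le_sum fun i _ =>
      sum_sq_mul_weight_le_div (C i) (hanti i) lam hpos (hpos i)
  linarith

theorem stmt_18 {L : Type*} [LieRing L] [LieAlgebra ℝ L]
    [NormedAddCommGroup L] [InnerProductSpace ℝ L] [FiniteDimensional ℝ L]
    (hskew : ∀ X Y Z : L, ⟪⁅X, Y⁆, Z⟫ = -⟪Y, ⁅X, Z⁆⟫)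
    (hss : ∀ X : L, (∀ Y : L, killingForm ℝ L X Y = 0) → X = 0)
    {n : ℕ} (b : OrthonormalBasis (Fin n) ℝ L)
    (C : Fin n → Fin n → Fin n → ℝ) (hC : ∀ i j k, C i j k = ⟪⁅b i, b j⁆, b k⟫)
    (lam : Fin n → ℝ) (hlam : ∀ i, 1 ≤ lam i) (hone : ∃ i, 1 < lam i) :
    (1/4 : ℝ) * ∑ i, ∑ j, ∑ k, (C i j k)^2 * (2 / lam i - lam k / (lam i * lam j)) <
      (1/4 : ℝ) * ∑ i, ∑ j, ∑ k, (C i j k)^2 :=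
  stmt_18_general hskew hss b C hC lam hlam hone
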